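/- Let a = cos(θ/2) and b = e^{−iφ} sin(θ/2), and consider F²(θ,φ) = 1 − p²[(|a|²−|b|²)² − ((b·conj(a))² + (a·conj(b))²) + 5|a|²|b|²] for a fixed p with 0 < p ≤ 1. Then min over (θ,φ) of F² equals 1 − (7/4)p², and the minimum is attained at θ = π/2, φ = π/2. -/

import Mathlib

/-! Write `F² = 1 - p² L(a, b)`. Since `a b̄` is the conjugate of `b ā`, the cross term of `L` is
`2 Re (b ā)² ≥ -2 |a|²|b|²`, so for a normalized state `L ≤ 1 + 3 |a|²|b|² ≤ 7/4` by AM–GM.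
Equality needs `|a|² = |b|² = 1/2` and `(b ā)²` real negative, which `θ = φ = π/2` achieves. -/

open ComplexConjugate

/-- The order-`p²` fidelity of the encoded state `a|0_L⟩ + b|1_L⟩`
(with `a = cos(θ/2)`, `b = e^{-iφ} sin(θ/2)`) under 4-qubit noise and the
adaptive Petz recovery. -/
noncomputable def F2QEC (p θ φ : ℝ) : ℝ :=
  let a : ℂ := (Real.cos (θ / 2) : ℂ)
  let b : ℂ := Complex.exp (-(Complex.I * φ)) * (Real.sin (θ / 2) : ℂ)
  1 - p ^ 2 * ((‖a‖ ^ 2 - ‖b‖ ^ 2) ^ 2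
      - ((b * conj a) ^ 2 + (a * conj b) ^ 2).re
      + 5 * ‖a‖ ^ 2 * ‖b‖ ^ 2)

noncomputable def fidelityLoss (a b : ℂ) : ℝ :=
  (‖a‖ ^ 2 - ‖b‖ ^ 2) ^ 2 - ((b * conj a) ^ 2 + (a * conj b) ^ 2).re + 5 * ‖a‖ ^ 2 * ‖b‖ ^ 2

lemma F2QEC_eq_fidelityLoss (p θ φ : ℝ) :
    F2QEC p θ φ = 1 - p ^ 2 *
      fidelityLoss (Real.cos (θ / 2)) (Complex.exp (-(Complex.I * φ)) * Real.sin (θ / 2)) :=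
  rfl

lemma fidelityLoss_le {a b : ℂ} (hab : ‖a‖ ^ 2 + ‖b‖ ^ 2 = 1) : fidelityLoss a b ≤ 7 / 4 := by
  set z := (b * conj a) ^ 2
  have hcross : ((b * conj a) ^ 2 + (a * conj b) ^ 2).re = 2 * z.re := by
    have : (a * conj b) ^ 2 = conj z := by simp only [z, map_pow, map_mul, Complex.conj_conj]; ring
    rw [this, Complex.add_re, Complex.conj_re]; ring
  have hz : -(‖a‖ ^ 2 * ‖b‖ ^ 2) ≤ z.re := by
    have : ‖z‖ = ‖a‖ ^ 2 * ‖b‖ ^ 2 := by simp only [z, norm_pow, norm_mul, Complex.norm_conj]; ring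
    linarith [neg_abs_le z.re, Complex.abs_re_le_norm z]
  have hamgm : ‖a‖ ^ 2 * ‖b‖ ^ 2 ≤ 1 / 4 := by nlinarith [sq_nonneg (‖a‖ ^ 2 - ‖b‖ ^ 2)]
  unfold fidelityLoss
  rw [hcross]
  nlinarith

lemma norm_sq_cos_add_norm_sq_exp_mul_sin (θ φ : ℝ) :
    ‖(Real.cos (θ / 2) : ℂ)‖ ^ 2 + ‖Complex.exp (-(Complex.I * φ)) * Real.sin (θ / 2)‖ ^ 2 = 1 := by
  rw [norm_mul, show -(Complex.I * φ) = ((-φ : ℝ) : ℂ) * Complex.I by push_cast; ring,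
    Complex.norm_exp_ofReal_mul_I, one_mul, Complex.norm_real, Complex.norm_real, Real.norm_eq_abs,
    Real.norm_eq_abs, sq_abs, sq_abs, Real.cos_sq_add_sin_sq]

lemma fidelityLoss_at_pi_div_two :
    fidelityLoss (Real.cos (Real.pi / 2 / 2)) (Complex.exp (-(Complex.I * ↑(Real.pi / 2))) *
      Real.sin (Real.pi / 2 / 2)) = 7 / 4 := by
  have hexp : Complex.exp (-(Complex.I * ↑(Real.pi / 2))) = -Complex.I := by
    rw [show -(Complex.I * ↑(Real.pi / 2)) = ((-(Real.pi / 2) : ℝ) : ℂ) * Complex.I by push_cast; ring,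
      Complex.exp_mul_I, ← Complex.ofReal_cos, ← Complex.ofReal_sin, Real.cos_neg, Real.sin_neg,
      Real.cos_pi_div_two, Real.sin_pi_div_two]
    push_cast; ring
  set c := Real.sqrt 2 / 2
  have hc : c ^ 2 = 1 / 2 := by
    rw [div_pow, Real.sq_sqrt (by norm_num : (0 : ℝ) ≤ 2)]; norm_num
  rw [show Real.pi / 2 / 2 = Real.pi / 4 by ring, Real.cos_pi_div_four, Real.sin_pi_div_four, hexp]
  have hb : ‖-Complex.I * (c : ℂ)‖ = ‖(c : ℂ)‖ := by simp
  have hcross : (-Complex.I * c * conj (c : ℂ)) ^ 2 + (c * conj (-Complex.I * c)) ^ 2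
      = ((-2 * c ^ 2 * c ^ 2 : ℝ) : ℂ) := by
    simp only [map_mul, map_neg, Complex.conj_I, Complex.conj_ofReal, neg_neg]
    push_cast
    linear_combination (2 * (c : ℂ) ^ 4) * Complex.I_sq
  unfold fidelityLoss
  rw [hb, hcross, Complex.ofReal_re, Complex.norm_real, Real.norm_eq_abs, sq_abs, hc]
  norm_num

theorem adaptive_QEC_worst_case_fidelity_general (p : ℝ) :
    (∀ θ φ : ℝ, F2QEC p (Real.pi / 2) (Real.pi / 2) ≤ F2QEC p θ φ) ∧
    F2QEC p (Real.pi / 2) (Real.pi / 2) = 1 - (7 / 4) * p ^ 2 := by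
  have hworst : F2QEC p (Real.pi / 2) (Real.pi / 2) = 1 - (7 / 4) * p ^ 2 := by
    rw [F2QEC_eq_fidelityLoss, fidelityLoss_at_pi_div_two]; ring
  refine ⟨fun θ φ => ?_, hworst⟩
  rw [hworst, F2QEC_eq_fidelityLoss, mul_comm (7 / 4 : ℝ)]
  gcongr
  exact fidelityLoss_le (norm_sq_cos_add_norm_sq_exp_mul_sin θ φ)

theorem adaptive_QEC_worst_case_fidelity (p : ℝ) (hp0 : 0 < p) (hp1 : p ≤ 1) :
    (∀ θ φ : ℝ, F2QEC p (Real.pi / 2) (Real.pi / 2) ≤ F2QEC p θ φ) ∧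
    F2QEC p (Real.pi / 2) (Real.pi / 2) = 1 - (7 / 4) * p ^ 2 :=
  adaptive_QEC_worst_case_fidelity_general p
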